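/- Let ∼ be an SK-congruence on a GEA E, and suppose c ∈ E is sharp with both E[0,c] and {f : f ⊥ c} hereditary. If E is upward directed, then c is central in E. -/
import Mathlib


universe u

/-- A generalized effect algebra: partial operation encoded by a definedness
relation `perp` together with a total function `op` whose values are only
meaningful when `perp` holds. -/
class GEA (E : Type u) where
  zero : E
  perp : E → E → Prop
  op : E → E → E
  perp_comm : ∀ {e f : E}, perp e f → perp f e
  op_comm : ∀ {e f : E}, perp e f → op e f = op f e
  assoc_perp₁ : ∀ {d e f : E}, perp e f → perp d (op e f) → perp d e
  assoc_perp₂ : ∀ {d e f : E}, perp e f → perp d (op e f) → perp (op d e) f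
  assoc_eq : ∀ {d e f : E}, perp e f → perp d (op e f) →
    op d (op e f) = op (op d e) f
  perp_zero : ∀ e : E, perp e zero
  op_zero : ∀ e : E, op e zero = e
  cancel : ∀ {d e f : E}, perp d e → perp d f → op d e = op d f → e = f
  pos : ∀ {e f : E}, perp e f → op e f = zero → e = zero ∧ f = zero

namespace GEA

variable {E : Type u} [GEA E]

/-- `e ≤ f` iff `e ⊕ d = f` for some `d`. -/
def le (e f : E) : Prop := ∃ d : E, perp e d ∧ op e d = f

/-- `p` is sharp. -/
def Sharp (p : E) : Prop := ∀ d : E, le d p → perp d p → d = zero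

/-- `p` is principal. -/
def Principal (p : E) : Prop :=
  ∀ e f : E, le e p → le f p → perp e f → le (op e f) p

/-- An ideal of a GEA. -/
def Ideal (S : Set E) : Prop :=
  (∀ s t : E, s ∈ S → le t s → t ∈ S) ∧
  (∀ s t : E, s ∈ S → t ∈ S → perp s t → op s t ∈ S)

/-- `E = H ⊕ K` : a direct sum decomposition into two subsets. -/
def DirectSum (H K : Set E) : Prop :=
  (∀ h k : E, h ∈ H → k ∈ K → perp h k) ∧
  (∀ e : E, ∃! p : E × E,
    p.1 ∈ H ∧ p.2 ∈ K ∧ perp p.1 p.2 ∧ op p.1 p.2 = e)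

/-- `FinSum e s x` : `x` is the (well-defined) orthosum of the finite
subfamily of `e` indexed by the finset `s`. -/
inductive FinSum {I : Type} (e : I → E) : Finset I → E → Prop
  | empty : FinSum e ∅ zero
  | cons {s : Finset I} {i : I} {x : E} (h : i ∉ s) :
      FinSum e s x → perp (e i) x → FinSum e (Finset.cons i s h) (op (e i) x)

/-- A family is orthogonal iff all its finite partial orthosums exist. -/
def OrthoFam {I : Type} (e : I → E) : Prop := ∀ s : Finset I, ∃ x : E, FinSum e s x

/-- `m` is the orthosum of the family `e` : the family is orthogonal and `m`
is the supremum of its finite partial orthosums. -/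
def IsOrthosum {I : Type} (e : I → E) (m : E) : Prop :=
  OrthoFam e ∧ (∀ (s : Finset I) (x : E), FinSum e s x → le x m) ∧
  ∀ b : E, (∀ (s : Finset I) (x : E), FinSum e s x → le x b) → le m b

/-- Dedekind orthocompleteness. -/
def DedekindOC (E : Type u) [GEA E] : Prop :=
  ∀ (I : Type) (e : I → E), OrthoFam e →
    (∃ b : E, ∀ (s : Finset I) (x : E), FinSum e s x → le x b) →
    ∃ m : E, IsOrthosum e m

/-- A Sherstnev–Kalinin congruence on a GEA. -/
structure SKCong (E : Type u) [GEA E] (sim : E → E → Prop) : Prop where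
  refl : ∀ e : E, sim e e
  symm : ∀ {e f : E}, sim e f → sim f e
  trans : ∀ {d e f : E}, sim d e → sim e f → sim d f
  sk1 : ∀ {e : E}, sim e zero → e = zero
  sk2 : ∀ {I : Type} (e f : I → E) (se sf : E), IsOrthosum e se →
    IsOrthosum f sf → (∀ i : I, sim (e i) (f i)) → sim se sf
  sk3d : ∀ {p s t : E}, perp s t → sim p (op s t) →
    ∃ e f : E, perp e f ∧ op e f = p ∧ sim e s ∧ sim f t
  sk3e : ∀ {e f s t : E}, perp e f → perp s t → op e f = op s t →
    ∃ e₁ e₂ f₁ f₂ : E, perp e₁ e₂ ∧ op e₁ e₂ = e ∧ perp f₁ f₂ ∧ op f₁ f₂ = f ∧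
      perp e₁ f₁ ∧ sim s (op e₁ f₁) ∧ perp e₂ f₂ ∧ sim t (op e₂ f₂)
  sk4a : ∀ {e f : E}, ¬ perp e f →
    ∃ e₁ f₁ : E, e₁ ≠ zero ∧ f₁ ≠ zero ∧ le e₁ e ∧ le f₁ f ∧ sim e₁ f₁
  sk4b : ∀ {e f : E}, ¬ le e f →
    ∃ e₁ d₁ : E, e₁ ≠ zero ∧ d₁ ≠ zero ∧ le e₁ e ∧ perp d₁ f ∧ sim e₁ d₁

/-- Subequivalence: `f ≲ e`. -/
def Subeq (sim : E → E → Prop) (f e : E) : Prop :=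
  ∃ e₁ : E, le e₁ e ∧ sim f e₁

/-- `e` and `f` are related. -/
def Related (sim : E → E → Prop) (e f : E) : Prop :=
  ∃ e₁ f₁ : E, e₁ ≠ zero ∧ f₁ ≠ zero ∧ le e₁ e ∧ le f₁ f ∧ sim e₁ f₁

/-- A hereditary subset. -/
def Hereditary (sim : E → E → Prop) (H : Set E) : Prop :=
  ∀ h e : E, h ∈ H → Subeq sim e h → e ∈ H

/-- An exocentral mapping on a GEA. -/
structure Exocentral (π : E → E) : Prop where
  perp_map : ∀ {e f : E}, perp e f → perp (π e) (π f)
  op_map : ∀ {e f : E}, perp e f → π (op e f) = op (π e) (π f)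
  idem : ∀ e : E, π (π e) = π e
  dec : ∀ e : E, le (π e) e
  orth : ∀ {e f : E}, π e = e → π f = zero → perp e f

/-- `π'` is the complementary mapping of `π` : `π'e = e ⊖ πe`. -/
def IsComplMap (π π' : E → E) : Prop :=
  ∀ e : E, perp (π e) (π' e) ∧ op (π e) (π' e) = e

/-- `π` (with complement `π'`) splits the equivalence relation `sim`. -/
def Splits (sim : E → E → Prop) (π π' : E → E) : Prop :=
  ∀ e f : E, e ∈ Set.range π → f ∈ Set.range π' → sim e f →
    e = zero ∧ f = zero

/-- A hull system `(η_e)_{e ∈ E}` on a GEA, where `η e : E → E` is the hull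
mapping indexed by `e`. -/
structure HullSystem (E : Type u) [GEA E] (η : E → E → E) : Prop where
  exo : ∀ e : E, Exocentral (η e)
  hs1 : ∀ x : E, η zero x = zero
  hs2 : ∀ e : E, η e e = e
  hs3 : ∀ e f x : E, η (η e f) x = η e (η f x)
  hs3' : ∀ e f x : E, η e (η f x) = η f (η e x)

/-- A GEX-orthogonal family. -/
def GEXOrtho {I : Type} (e : I → E) : Prop :=
  ∃ π : I → E → E, (∀ i : I, Exocentral (π i)) ∧
    (∀ i j : I, i ≠ j → ∀ x : E, π i (π j x) = zero) ∧
    ∀ i : I, π i (e i) = e i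

/-- Central orthocompleteness. -/
def CentrallyOC (E : Type u) [GEA E] : Prop :=
  ∀ (I : Type) (e : I → E), GEXOrtho e →
    (∃ m : E, IsOrthosum e m) ∧
    ∀ f : E, (∀ i : I, perp f (e i)) → ∀ m : E, IsOrthosum e m → perp f m

/-- A dimension equivalence relation: an SK-congruence satisfying SK4a′. -/
def IsDER (E : Type u) [GEA E] (sim : E → E → Prop) : Prop :=
  SKCong E sim ∧
  ∀ e f : E, ¬ Related sim e f →
    ∃ π π' : E → E, Exocentral π ∧ IsComplMap π π' ∧ Splits sim π π' ∧
      π e = e ∧ π' f = f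

/-- `η` is the hull system determined by the hull-determining set `Σ∼(E)` of
exocentral mappings splitting `sim` : each `η e` belongs to `Σ∼(E)` and is the
smallest member of `Σ∼(E)` fixing `e`. -/
def SigmaHull (sim : E → E → Prop) (η : E → E → E) : Prop :=
  (∀ e : E, ∃ π' : E → E, IsComplMap (η e) π' ∧ Splits sim (η e) π') ∧
  ∀ (e : E) (π π' : E → E), Exocentral π → IsComplMap π π' →
    Splits sim π π' → π e = e →
      (∀ x : E, η e (π x) = η e x) ∧ (∀ x : E, π (η e x) = η e x)

/-- A simple element. -/
def Simple (sim : E → E → Prop) (k : E) : Prop :=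
  ∀ e e' : E, perp e e' → op e e' = k → ¬ Related sim e e'

/-- A finite element. -/
def Finite' (sim : E → E → Prop) (f : E) : Prop :=
  ∀ e : E, le e f → sim e f → e = f

end GEA
namespace GEA

variable {E : Type u} [GEA E]

lemma perp_zero'' (e : E) : perp (zero : E) e := perp_comm (perp_zero e)

lemma zero_op' (e : E) : op (zero : E) e = e := by
  rw [op_comm (perp_zero'' e), op_zero]

lemma le_refl' (e : E) : le e e := ⟨zero, perp_zero e, op_zero e⟩

/-- associativity in the other direction -/
lemma assoc' {d e f : E} (hde : perp d e) (h : perp (op d e) f) :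
    perp e f ∧ perp d (op e f) ∧ op (op d e) f = op d (op e f) := by
  have hfde : perp f (op d e) := perp_comm h
  have hfd : perp f d := assoc_perp₁ hde hfde
  have h2 : perp (op f d) e := assoc_perp₂ hde hfde
  have heq1 : op f (op d e) = op (op f d) e := assoc_eq hde hfde
  have hef : perp e f := assoc_perp₁ hfd (perp_comm h2)
  have hedf : perp e (op f d) := perp_comm h2
  have h3 : perp (op e f) d := assoc_perp₂ hfd hedf
  have heq2 : op e (op f d) = op (op e f) d := assoc_eq hfd hedf
  refine ⟨hef, perp_comm h3, ?_⟩
  calc op (op d e) f = op f (op d e) := op_comm h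
    _ = op (op f d) e := heq1
    _ = op e (op f d) := op_comm h2
    _ = op (op e f) d := heq2
    _ = op d (op e f) := op_comm h3

lemma perp_of_le_left {x y z : E} (h : le x y) (hyz : perp y z) : perp x z := by
  obtain ⟨a, hxa, rfl⟩ := h
  have h2 : perp (op a x) z := by rwa [op_comm hxa] at hyz
  exact (assoc' (perp_comm hxa) h2).1

lemma le_trans' {x y z : E} (hxy : le x y) (hyz : le y z) : le x z := by
  obtain ⟨a, hxa, rfl⟩ := hxy
  obtain ⟨b, hb, rfl⟩ := hyz
  obtain ⟨hab, hx_ab, heq⟩ := assoc' hxa hb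
  exact ⟨op a b, hx_ab, heq.symm⟩

lemma le_op_left {x y : E} (h : perp x y) : le x (op x y) := ⟨y, h, rfl⟩

lemma le_op_right {x y : E} (h : perp x y) : le y (op x y) :=
  ⟨x, perp_comm h, (op_comm h).symm⟩

end GEA

open GEA

section SimHelpers
variable {E : Type u} [GEA E] {sim : E → E → Prop} {c : E}

lemma my_le_c_of_sim (hher1 : Hereditary sim {e : E | le e c})
    {x y : E} (hxy : sim x y) (hy : le y c) : le x c :=
  hher1 c x (le_refl' c) ⟨y, hy, hxy⟩

lemma my_perp_c_of_sim (hher2 : Hereditary sim {f : E | perp f c})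
    {x y h : E} (hxy : sim x y) (hy : le y h) (hh : perp h c) : perp x c :=
  hher2 h x hh ⟨y, hy, hxy⟩

lemma my_part1 (hsim : SKCong E sim) {p s t : E} (hst : perp s t)
    (hp : sim p (op s t)) : ∃ a : E, le a p ∧ sim s a := by
  obtain ⟨u, v, huv, hop, hus, hvt⟩ := hsim.sk3d hst hp
  exact ⟨u, ⟨v, huv, hop⟩, hsim.symm hus⟩

end SimHelpers


/-- in a directed GEA, a sharp element with hereditary interval
and hereditary orthogonal set is central. -/
theorem sharp_hereditary_directed_central {E : Type u} [GEA E]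
    (sim : E → E → Prop) (hsim : GEA.SKCong E sim) (c : E)
    (hsharp : GEA.Sharp c)
    (hher1 : GEA.Hereditary sim {e : E | GEA.le e c})
    (hher2 : GEA.Hereditary sim {f : E | GEA.perp f c})
    (hdir : ∀ e f : E, ∃ d : E, GEA.le e d ∧ GEA.le f d) :
    GEA.Principal c ∧
    (∀ e : E, ∃! p : E × E, GEA.le p.1 c ∧ GEA.perp p.2 c ∧
      GEA.perp p.1 p.2 ∧ GEA.op p.1 p.2 = e) ∧
    (∀ p q : E, GEA.perp p q → GEA.perp p c → GEA.perp q c →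
      GEA.perp (GEA.op p q) c) := by
  have exist : ∀ e : E, ∃ p₁ p₂ : E,
      GEA.le p₁ c ∧ GEA.perp p₂ c ∧ GEA.perp p₁ p₂ ∧ GEA.op p₁ p₂ = e := by
    intro e
    obtain ⟨d, ⟨r, her, herd⟩, ⟨t, hct, hctd⟩⟩ := hdir e c
    have heq' : GEA.op e r = GEA.op c t := by rw [herd, hctd]
    obtain ⟨e₁, e₂, f₁, f₂, h12, hope, hf12, hopf, h11, hsimc, h22, hsimt⟩ :=
      hsim.sk3e her hct heq'
    obtain ⟨a, hac, hsa⟩ := my_part1 hsim h11 hsimc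
    have he₁c : GEA.le e₁ c := my_le_c_of_sim hher1 hsa hac
    obtain ⟨b, hbt, hsb⟩ := my_part1 hsim h22 hsimt
    have he₂c : GEA.perp e₂ c :=
      my_perp_c_of_sim hher2 hsb hbt (GEA.perp_comm hct)
    exact ⟨e₁, e₂, he₁c, he₂c, h12, hope⟩
  have killA : ∀ x g1 g2 : E, GEA.perp g1 g2 → GEA.le g1 c → GEA.le g2 c →
      GEA.le x (GEA.op g1 g2) → GEA.perp x c → x = GEA.zero := by
    intro x g1 g2 hg hg1 hg2 hxle hxc
    obtain ⟨y, hxy, hxyeq⟩ := hxle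
    obtain ⟨x₁, x₂, y₁, y₂, hx12, hopx, hy12, hopy, hxy1, hs1, hxy2, hs2⟩ :=
      hsim.sk3e hxy hg hxyeq
    obtain ⟨a, hag, hsa⟩ := my_part1 hsim hxy1 hs1
    have hx₁c : GEA.le x₁ c := my_le_c_of_sim hher1 hsa (GEA.le_trans' hag hg1)
    have hx₁perp : GEA.perp x₁ c :=
      GEA.perp_of_le_left (hopx ▸ GEA.le_op_left hx12) hxc
    have hx₁0 : x₁ = GEA.zero := hsharp x₁ hx₁c hx₁perp
    obtain ⟨b, hbg, hsb⟩ := my_part1 hsim hxy2 hs2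
    have hx₂c : GEA.le x₂ c := my_le_c_of_sim hher1 hsb (GEA.le_trans' hbg hg2)
    have hx₂perp : GEA.perp x₂ c :=
      GEA.perp_of_le_left (hopx ▸ GEA.le_op_right hx12) hxc
    have hx₂0 : x₂ = GEA.zero := hsharp x₂ hx₂c hx₂perp
    rw [← hopx, hx₁0, hx₂0, GEA.op_zero]
  have killB : ∀ x g1 g2 : E, GEA.perp g1 g2 → GEA.perp g1 c → GEA.perp g2 c →
      GEA.le x (GEA.op g1 g2) → GEA.le x c → x = GEA.zero := by
    intro x g1 g2 hg hg1 hg2 hxle hxc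
    obtain ⟨y, hxy, hxyeq⟩ := hxle
    obtain ⟨x₁, x₂, y₁, y₂, hx12, hopx, hy12, hopy, hxy1, hs1, hxy2, hs2⟩ :=
      hsim.sk3e hxy hg hxyeq
    obtain ⟨a, hag, hsa⟩ := my_part1 hsim hxy1 hs1
    have hx₁perp : GEA.perp x₁ c := my_perp_c_of_sim hher2 hsa hag hg1
    have hx₁le : GEA.le x₁ c := GEA.le_trans' (hopx ▸ GEA.le_op_left hx12) hxc
    have hx₁0 : x₁ = GEA.zero := hsharp x₁ hx₁le hx₁perp
    obtain ⟨b, hbg, hsb⟩ := my_part1 hsim hxy2 hs2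
    have hx₂perp : GEA.perp x₂ c := my_perp_c_of_sim hher2 hsb hbg hg2
    have hx₂le : GEA.le x₂ c := GEA.le_trans' (hopx ▸ GEA.le_op_right hx12) hxc
    have hx₂0 : x₂ = GEA.zero := hsharp x₂ hx₂le hx₂perp
    rw [← hopx, hx₁0, hx₂0, GEA.op_zero]
  have hprin : GEA.Principal c := by
    intro e f hec hfc hef
    obtain ⟨p₁, p₂, h1, h2, h3, h4⟩ := exist (GEA.op e f)
    have hp₂le : GEA.le p₂ (GEA.op e f) := h4 ▸ GEA.le_op_right h3
    have h0 : p₂ = GEA.zero := killA p₂ e f hef hec hfc hp₂le h2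
    rw [← h4, h0, GEA.op_zero]; exact h1
  have third : ∀ p q : E, GEA.perp p q → GEA.perp p c → GEA.perp q c →
      GEA.perp (GEA.op p q) c := by
    intro p q hpq hpc hqc
    obtain ⟨p₁, p₂, h1, h2, h3, h4⟩ := exist (GEA.op p q)
    have hp₁le : GEA.le p₁ (GEA.op p q) := h4 ▸ GEA.le_op_left h3
    have h0 : p₁ = GEA.zero := killB p₁ p q hpq hpc hqc hp₁le h1
    rw [← h4, h0, GEA.zero_op']; exact h2
  have uniq : ∀ h k h' k' : E, GEA.le h c → GEA.perp k c → GEA.perp h k →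
      GEA.le h' c → GEA.perp k' c → GEA.perp h' k' →
      GEA.op h k = GEA.op h' k' → h = h' ∧ k = k' := by
    intro h k h' k' hh hk hhk hh' hk' hh'k' heq
    obtain ⟨s, hhs, hcs⟩ := hh
    have hck : GEA.perp c k := GEA.perp_comm hk
    have hhsk : GEA.perp (GEA.op h s) k := by rw [hcs]; exact hck
    obtain ⟨hsk, hh_sk, hA⟩ := GEA.assoc' hhs hhsk
    have hh_ks : GEA.perp h (GEA.op k s) := by rwa [GEA.op_comm hsk] at hh_sk
    have hks : GEA.perp k s := GEA.perp_comm hsk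
    have e1 : GEA.op h (GEA.op k s) = GEA.op (GEA.op h k) s := GEA.assoc_eq hks hh_ks
    have hhks_s : GEA.perp (GEA.op h k) s := GEA.assoc_perp₂ hks hh_ks
    have key : GEA.op c k = GEA.op (GEA.op h k) s := by
      rw [← hcs, hA, GEA.op_comm hsk, e1]
    have hpks : GEA.perp (GEA.op h' k') s := by rw [← heq]; exact hhks_s
    have hsh' : GEA.perp s h' := GEA.assoc_perp₁ hh'k' (GEA.perp_comm hpks)
    have e2 : GEA.op (GEA.op h' k') s = GEA.op (GEA.op s h') k' := by
      rw [GEA.op_comm hpks]; exact GEA.assoc_eq hh'k' (GEA.perp_comm hpks)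
    have hu_k' : GEA.perp (GEA.op s h') k' := GEA.assoc_perp₂ hh'k' (GEA.perp_comm hpks)
    have hsc : GEA.le s c := ⟨h, GEA.perp_comm hhs, by rw [← GEA.op_comm hhs]; exact hcs⟩
    have huc : GEA.le (GEA.op s h') c := hprin s h' hsc hh' hsh'
    obtain ⟨v, huv, hcv⟩ := huc
    have huvk : GEA.perp (GEA.op (GEA.op s h') v) k := by rw [hcv]; exact hck
    obtain ⟨hvk, hu_vk, hB⟩ := GEA.assoc' huv huvk
    have main : GEA.op (GEA.op s h') (GEA.op v k) = GEA.op (GEA.op s h') k' := by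
      rw [← hB, hcv, key, heq, e2]
    have hvk_eq : GEA.op v k = k' := GEA.cancel hu_vk hu_k' main
    have hvc_le : GEA.le v c :=
      ⟨GEA.op s h', GEA.perp_comm huv, by rw [← GEA.op_comm huv]; exact hcv⟩
    have hvk'_le : GEA.le v k' := ⟨k, hvk, hvk_eq⟩
    have hv_perp : GEA.perp v c := GEA.perp_of_le_left hvk'_le hk'
    have hv0 : v = GEA.zero := hsharp v hvc_le hv_perp
    have hkk' : k = k' := by rw [← hvk_eq, hv0, GEA.zero_op']
    have hkh : GEA.op k h = GEA.op k h' := by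
      calc GEA.op k h = GEA.op h k := (GEA.op_comm hhk).symm
        _ = GEA.op h' k' := heq
        _ = GEA.op k' h' := GEA.op_comm hh'k'
        _ = GEA.op k h' := by rw [hkk']
    have hh'k : GEA.perp k h' := by rw [hkk']; exact GEA.perp_comm hh'k'
    exact ⟨GEA.cancel (GEA.perp_comm hhk) hh'k hkh, hkk'⟩
  refine ⟨hprin, ?_, third⟩
  intro e
  obtain ⟨p₁, p₂, h1, h2, h3, h4⟩ := exist e
  refine ⟨(p₁, p₂), ⟨h1, h2, h3, h4⟩, ?_⟩
  rintro ⟨q₁, q₂⟩ ⟨hq1, hq2, hq3, hq4⟩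
  have hu := uniq q₁ q₂ p₁ p₂ hq1 hq2 hq3 h1 h2 h3 (by rw [hq4, h4])
  rw [Prod.mk.injEq]
  exact hu
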